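/- Let N ∈ ℕ, τ > 0, let M ∈ ℝ^{N×N} be diagonal with positive diagonal entries, and let D₊, D₋ ∈ ℝ^{N×N} satisfy M·D₊ + D₋ᵀ·M = 0 and D₊𝟙 = D₋𝟙 = 0, where 𝟙 ∈ ℝ^N is the all-ones vector. Set D = (D₊ + D₋)/2. Suppose u, v, w : ℝ → ℝ^N are differentiable and satisfy, for all t: u′ = −(1/3)·( D(u∘u) + u∘(Du) ) − D₊w, v′ = (1/τ)·(Dv − w), and w′ = (1/τ)·(v − D₋u), where ∘ is the entrywise product. Then both the discrete mass t ↦ 𝟙ᵀ M u(t) and the discrete modified energy t ↦ (1/2)·( u(t)ᵀ M u(t) + τ·v(t)ᵀ M v(t) + τ·w(t)ᵀ M w(t) ) are constant in t. -/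

import Mathlib

/-!
The SBP relation `M D₊ = -D₋ᵀ M` makes `D₊` and `-D₋` adjoint for `⟨x, y⟩ = xᵀ M y`, so the
central operator `D` is skew-adjoint; since `M` is diagonal, entrywise products move across the
inner product, `⟨x, y ∘ z⟩ = ⟨x ∘ y, z⟩`. In the time derivative of the energy the two halves of
the split nonlinear term `D (u ∘ u) + u ∘ D u` cancel each other, the couplings `-⟨u, D₊ w⟩` and
`-⟨w, D₋ u⟩` cancel, and `⟨v, D v⟩ = 0`; in that of the mass, consistency `D₊ 𝟙 = D₋ 𝟙 = 0`
removes the remaining terms.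
-/

open Matrix

namespace Matrix

variable {n R : Type*} [Fintype n] [CommRing R] {M A B : Matrix n n R}

theorem IsSymm.dotProduct_mulVec_comm (hM : M.IsSymm) (x y : n → R) :
    x ⬝ᵥ M *ᵥ y = y ⬝ᵥ M *ᵥ x := by
  rw [dotProduct_mulVec, ← mulVec_transpose, hM.eq, dotProduct_comm]

theorem IsDiag.dotProduct_mulVec_mul (hM : M.IsDiag) (x y z : n → R) :
    x ⬝ᵥ M *ᵥ (y * z) = (x * y) ⬝ᵥ M *ᵥ z := by
  classical
  rw [← hM.diagonal_diag]
  simp only [dotProduct, mulVec_diagonal, Pi.mul_apply]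
  exact Finset.sum_congr rfl fun i _ => by ring

theorem dotProduct_mulVec_mulVec_eq_neg_of_sbp
    (h : M * A + Bᵀ * M = 0) (x y : n → R) :
    x ⬝ᵥ M *ᵥ (A *ᵥ y) = -(B *ᵥ x ⬝ᵥ M *ᵥ y) := by
  rw [mulVec_mulVec, eq_neg_of_add_eq_zero_left h, neg_mulVec, dotProduct_neg,
    ← mulVec_mulVec, dotProduct_mulVec, vecMul_transpose]

theorem dotProduct_mulVec_mulVec_eq_neg_of_sbp' (hM : M.IsSymm) (h : M * A + Bᵀ * M = 0)
    (x y : n → R) : x ⬝ᵥ M *ᵥ (B *ᵥ y) = -(A *ᵥ x ⬝ᵥ M *ᵥ y) := by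
  rw [hM.dotProduct_mulVec_comm, hM.dotProduct_mulVec_comm (A *ᵥ x),
    dotProduct_mulVec_mulVec_eq_neg_of_sbp h, neg_neg]

variable {D : Matrix n n R} {c : R}

theorem dotProduct_mulVec_mulVec_eq_neg_of_sbp_central (hM : M.IsSymm)
    (h : M * A + Bᵀ * M = 0) (hD : D = c • (A + B)) (x y : n → R) :
    x ⬝ᵥ M *ᵥ (D *ᵥ y) = -(D *ᵥ x ⬝ᵥ M *ᵥ y) := by
  simp only [hD, smul_mulVec, add_mulVec, mulVec_smul, mulVec_add, dotProduct_smul,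
    smul_dotProduct, dotProduct_add, add_dotProduct, smul_eq_mul,
    dotProduct_mulVec_mulVec_eq_neg_of_sbp h, dotProduct_mulVec_mulVec_eq_neg_of_sbp' hM h]
  ring

theorem dotProduct_mulVec_mulVec_self_eq_zero_of_sbp_central (hM : M.IsSymm)
    (h : M * A + Bᵀ * M = 0) (hD : D = c • (A + B)) (x : n → R) :
    x ⬝ᵥ M *ᵥ (D *ᵥ x) = 0 := by
  simp only [hD, smul_mulVec, add_mulVec, mulVec_smul, mulVec_add, dotProduct_smul,
    dotProduct_add, dotProduct_mulVec_mulVec_eq_neg_of_sbp' hM h x x,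
    hM.dotProduct_mulVec_comm (A *ᵥ x) x, add_neg_cancel, smul_zero]

end Matrix

section KdVH

variable {n R : Type*} [Fintype n] [CommRing R] {M A B D : Matrix n n R} {c : R}

theorem kdvh_mass_rate_eq_zero (hM : M.IsDiag) (h : M * A + Bᵀ * M = 0)
    (hA1 : A *ᵥ 1 = 0) (hB1 : B *ᵥ 1 = 0) (hD : D = c • (A + B)) (a : R) (u w : n → R) :
    1 ⬝ᵥ M *ᵥ (a • (D *ᵥ (u * u) + u * D *ᵥ u) - A *ᵥ w) = 0 := by
  have hD1 : D *ᵥ 1 = 0 := by rw [hD, smul_mulVec, add_mulVec, hA1, hB1, add_zero, smul_zero]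
  have hquadratic : 1 ⬝ᵥ M *ᵥ (D *ᵥ (u * u)) = 0 := by
    rw [dotProduct_mulVec_mulVec_eq_neg_of_sbp_central hM.isSymm h hD, hD1, zero_dotProduct,
      neg_zero]
  have hsplit : 1 ⬝ᵥ M *ᵥ (u * D *ᵥ u) = 0 := by
    rw [hM.dotProduct_mulVec_mul, one_mul,
      dotProduct_mulVec_mulVec_self_eq_zero_of_sbp_central hM.isSymm h hD]
  have hcoupling : 1 ⬝ᵥ M *ᵥ (A *ᵥ w) = 0 := by
    rw [dotProduct_mulVec_mulVec_eq_neg_of_sbp h, hB1, zero_dotProduct, neg_zero]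
  rw [mulVec_sub, dotProduct_sub, mulVec_smul, dotProduct_smul, mulVec_add, dotProduct_add,
    hquadratic, hsplit, hcoupling, add_zero, smul_zero, sub_zero]

theorem kdvh_energy_rate_eq_zero (hM : M.IsDiag) (h : M * A + Bᵀ * M = 0)
    (hD : D = c • (A + B)) (a : R) (u v w : n → R) :
    u ⬝ᵥ M *ᵥ (a • (D *ᵥ (u * u) + u * D *ᵥ u) - A *ᵥ w) + v ⬝ᵥ M *ᵥ (D *ᵥ v - w)
      + w ⬝ᵥ M *ᵥ (v - B *ᵥ u) = 0 := by
  have hcubic : u ⬝ᵥ M *ᵥ (D *ᵥ (u * u)) + u ⬝ᵥ M *ᵥ (u * D *ᵥ u) = 0 := by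
    rw [dotProduct_mulVec_mulVec_eq_neg_of_sbp_central hM.isSymm h hD,
      hM.dotProduct_mulVec_mul u u (D *ᵥ u), hM.isSymm.dotProduct_mulVec_comm (D *ᵥ u),
      neg_add_cancel]
  simp only [mulVec_sub, dotProduct_sub, mulVec_smul, dotProduct_smul, mulVec_add,
    dotProduct_add, smul_eq_mul,
    dotProduct_mulVec_mulVec_self_eq_zero_of_sbp_central hM.isSymm h hD,
    dotProduct_mulVec_mulVec_eq_neg_of_sbp h u w, hM.isSymm.dotProduct_mulVec_comm v w,
    hM.isSymm.dotProduct_mulVec_comm (B *ᵥ u) w]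
  linear_combination a * hcubic

end KdVH

section Calculus

variable {𝕜 n : Type*} [NontriviallyNormedField 𝕜] [Fintype n] {t : 𝕜}

theorem HasDerivAt.dotProduct {x y : 𝕜 → n → 𝕜} {x' y' : n → 𝕜}
    (hx : HasDerivAt x x' t) (hy : HasDerivAt y y' t) :
    HasDerivAt (fun s => x s ⬝ᵥ y s) (x' ⬝ᵥ y t + x t ⬝ᵥ y') t := by
  rw [hasDerivAt_pi] at hx hy
  have h := HasDerivAt.fun_sum (u := Finset.univ) fun i _ => (hx i).mul (hy i)
  simp only [Pi.mul_apply, Finset.sum_add_distrib] at h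
  exact h

theorem HasDerivAt.mulVec {m : Type*} (A : Matrix m n 𝕜) {x : 𝕜 → n → 𝕜} {x' : n → 𝕜}
    (hx : HasDerivAt x x' t) : HasDerivAt (fun s => A *ᵥ x s) (A *ᵥ x') t := by
  rw [hasDerivAt_pi] at hx ⊢
  exact fun i => HasDerivAt.fun_sum fun j _ => (hx j).const_mul (A i j)

theorem HasDerivAt.dotProduct_mulVec_self {M : Matrix n n 𝕜} (hM : M.IsSymm)
    {x : 𝕜 → n → 𝕜} {x' : n → 𝕜} (hx : HasDerivAt x x' t) :
    HasDerivAt (fun s => x s ⬝ᵥ M *ᵥ x s) (2 * (x t ⬝ᵥ M *ᵥ x')) t := by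
  convert hx.dotProduct (hx.mulVec M) using 1
  rw [hM.dotProduct_mulVec_comm x' (x t)]
  ring

end Calculus

theorem kdvh_semidiscretization_invariants_general (N : ℕ) (τ : ℝ) (hτ : 0 < τ)
    (M Dp Dm : Matrix (Fin N) (Fin N) ℝ)
    (hMdiag : M.IsDiag)
    (hSBP : M * Dp + Dm.transpose * M = 0)
    (hDp1 : Dp.mulVec (fun _ => 1) = 0) (hDm1 : Dm.mulVec (fun _ => 1) = 0)
    (D : Matrix (Fin N) (Fin N) ℝ) (hD : D = (1/2 : ℝ) • (Dp + Dm))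
    (u v w : ℝ → Fin N → ℝ)
    (hu : Differentiable ℝ u) (hv : Differentiable ℝ v) (hw : Differentiable ℝ w)
    (hueq : ∀ t : ℝ, deriv u t =
      -(1/3 : ℝ) • (D.mulVec (u t * u t) + u t * D.mulVec (u t)) - Dp.mulVec (w t))
    (hveq : ∀ t : ℝ, deriv v t = (1/τ) • (D.mulVec (v t) - w t))
    (hweq : ∀ t : ℝ, deriv w t = (1/τ) • (v t - Dm.mulVec (u t))) :
    (∀ t₁ t₂ : ℝ,
      (fun _ => (1:ℝ)) ⬝ᵥ M.mulVec (u t₁) = (fun _ => (1:ℝ)) ⬝ᵥ M.mulVec (u t₂)) ∧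
    (∀ t₁ t₂ : ℝ,
      (1/2 : ℝ) * (u t₁ ⬝ᵥ M.mulVec (u t₁) + τ * (v t₁ ⬝ᵥ M.mulVec (v t₁))
        + τ * (w t₁ ⬝ᵥ M.mulVec (w t₁))) =
      (1/2 : ℝ) * (u t₂ ⬝ᵥ M.mulVec (u t₂) + τ * (v t₂ ⬝ᵥ M.mulVec (v t₂))
        + τ * (w t₂ ⬝ᵥ M.mulVec (w t₂)))) := by
  have hmass : ∀ t, HasDerivAt (fun s => 1 ⬝ᵥ M *ᵥ u s) 0 t := fun t => by
    have h := (hasDerivAt_const t 1).dotProduct ((hu t).hasDerivAt.mulVec M)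
    rwa [zero_dotProduct, zero_add, hueq,
      kdvh_mass_rate_eq_zero hMdiag hSBP hDp1 hDm1 hD] at h
  have henergy : ∀ t, HasDerivAt (fun s => (1/2 : ℝ) * (u s ⬝ᵥ M *ᵥ u s
      + τ * (v s ⬝ᵥ M *ᵥ v s) + τ * (w s ⬝ᵥ M *ᵥ w s))) 0 t := fun t => by
    have hquad {x : ℝ → Fin N → ℝ} (hx : Differentiable ℝ x) :=
      (hx t).hasDerivAt.dotProduct_mulVec_self hMdiag.isSymm
    refine ((((hquad hu).add ((hquad hv).const_mul τ)).add ((hquad hw).const_mul τ)).const_mul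
      (1/2 : ℝ)).congr_deriv ?_
    rw [hueq, hveq, hweq]
    simp only [mulVec_smul, dotProduct_smul, smul_eq_mul]
    field_simp
    exact kdvh_energy_rate_eq_zero hMdiag hSBP hD _ _ _ _
  exact ⟨is_const_of_deriv_eq_zero (fun t => (hmass t).differentiableAt)
      (fun t => (hmass t).deriv),
    is_const_of_deriv_eq_zero (fun t => (henergy t).differentiableAt) (fun t => (henergy t).deriv)⟩

/-- The upwind SBP semidiscretization of the KdVH system conserves the discrete mass
`𝟙ᵀMu` and the discrete modified energy `(1/2)(uᵀMu + τvᵀMv + τwᵀMw)` for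
diagonal-norm consistent periodic upwind SBP operators. -/
theorem kdvh_semidiscretization_invariants (N : ℕ) (τ : ℝ) (hτ : 0 < τ)
    (M Dp Dm : Matrix (Fin N) (Fin N) ℝ)
    (hMdiag : M.IsDiag) (hMpos : ∀ i, 0 < M i i)
    (hSBP : M * Dp + Dm.transpose * M = 0)
    (hDp1 : Dp.mulVec (fun _ => 1) = 0) (hDm1 : Dm.mulVec (fun _ => 1) = 0)
    (D : Matrix (Fin N) (Fin N) ℝ) (hD : D = (1/2 : ℝ) • (Dp + Dm))
    (u v w : ℝ → Fin N → ℝ)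
    (hu : Differentiable ℝ u) (hv : Differentiable ℝ v) (hw : Differentiable ℝ w)
    (hueq : ∀ t : ℝ, deriv u t =
      -(1/3 : ℝ) • (D.mulVec (u t * u t) + u t * D.mulVec (u t)) - Dp.mulVec (w t))
    (hveq : ∀ t : ℝ, deriv v t = (1/τ) • (D.mulVec (v t) - w t))
    (hweq : ∀ t : ℝ, deriv w t = (1/τ) • (v t - Dm.mulVec (u t))) :
    (∀ t₁ t₂ : ℝ,
      (fun _ => (1:ℝ)) ⬝ᵥ M.mulVec (u t₁) = (fun _ => (1:ℝ)) ⬝ᵥ M.mulVec (u t₂)) ∧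
    (∀ t₁ t₂ : ℝ,
      (1/2 : ℝ) * (u t₁ ⬝ᵥ M.mulVec (u t₁) + τ * (v t₁ ⬝ᵥ M.mulVec (v t₁))
        + τ * (w t₁ ⬝ᵥ M.mulVec (w t₁))) =
      (1/2 : ℝ) * (u t₂ ⬝ᵥ M.mulVec (u t₂) + τ * (v t₂ ⬝ᵥ M.mulVec (v t₂))
        + τ * (w t₂ ⬝ᵥ M.mulVec (w t₂)))) :=
  kdvh_semidiscretization_invariants_general N τ hτ M Dp Dm hMdiag hSBP hDp1 hDm1 D hD u v w hu hv
    hw hueq hveq hweq
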